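/- Let p \ge 3 be a prime, and let n, r be positive integers. Let (a, b, c, d) \in V(p^r n), where V(N) is the set of tuples of four triples of nonnegative integers (a, b, c, d), each triple summing to N, with b_1 + c_1 + d_1 = N, a_1 + b_2 + d_2 = N, and a_2 + b_3 + c_2 = N. Writing B_N(a,b,c,d) = (-1)^{a_2 + b_1 + d_3} \binom{N}{a_1, a_2, a_3} \binom{N}{b_1, b_2, b_3} \binom{N}{c_1, c_2, c_3} \binom{N}{d_1, d_2, d_3}: if p divides all 12 components then B_{p^r n}(a, b, c, d) \equiv B_{p^{r-1} n}(a/p, b/p, c/p, d/p) (mod p^{2r}) (componentwise division), and if p does not divide all 12 components then p^{2r} divides B_{p^r n}(a, b, c, d). -/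

import Mathlib

/-- The trinomial (multinomial) coefficient `(a+b+c)! / (a! b! c!)`. -/
def trinom (a b c : ℕ) : ℕ :=
  (a + b + c).factorial / (a.factorial * b.factorial * c.factorial)

namespace SDC
open Finset

lemma trinom_eq (a b c : ℕ) :
    trinom a b c = (a + b + c).choose a * ((b + c).choose b) := by
  have h1 : (a + b + c).choose a * a.factorial * (b + c).factorial
      = (a + b + c).factorial := by
    have := Nat.choose_mul_factorial_mul_factorial
      (show a ≤ a + b + c by omega)
    simpa [show a + b + c - a = b + c by omega] using this
  have h2 : (b + c).choose b * b.factorial * c.factorial = (b + c).factorial := by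
    have := Nat.choose_mul_factorial_mul_factorial (show b ≤ b + c by omega)
    simpa [show b + c - b = c by omega] using this
  have key : (a + b + c).factorial
      = ((a + b + c).choose a * ((b + c).choose b)) *
        (a.factorial * b.factorial * c.factorial) := by
    rw [← h1, ← h2]; ring
  rw [trinom, key, Nat.mul_div_cancel]
  positivity

lemma trinom_pos (a b c : ℕ) : 0 < trinom a b c := by
  rw [trinom_eq]
  exact Nat.mul_pos (Nat.choose_pos (by omega)) (Nat.choose_pos (by omega))

lemma trinom_comm12 (a b c : ℕ) : trinom a b c = trinom b a c := by
  unfold trinom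
  rw [show a + b + c = b + a + c by omega]
  ring_nf

lemma trinom_comm13 (a b c : ℕ) : trinom a b c = trinom c b a := by
  unfold trinom
  rw [show a + b + c = c + b + a by omega]
  ring_nf

/-- If `p ∤ u` and `p^t ∣ u + v` then `p^t ∣ C(u+v, u)`. -/
lemma pow_dvd_choose_of_not_dvd {p : ℕ} (hp : p.Prime) {t u v : ℕ}
    (hu : ¬ p ∣ u) (hs : p ^ t ∣ u + v) : p ^ t ∣ (u + v).choose u := by
  rcases Nat.eq_zero_or_pos u with rfl | hu0
  · exact absurd (dvd_zero p) hu
  obtain ⟨u', rfl⟩ : ∃ u', u = u' + 1 := ⟨u - 1, by omega⟩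
  have key : (u' + 1) * (u' + v + 1).choose (u' + 1) = (u' + v + 1) * (u' + v).choose u' := by
    have := Nat.add_one_mul_choose_eq (u' + v) u'
    simpa [Nat.succ_eq_add_one, mul_comm] using this.symm
  have hdvd : p ^ t ∣ (u' + 1) * (u' + v + 1).choose (u' + 1) := by
    rw [key]
    exact Dvd.dvd.mul_right (by simpa [show u' + 1 + v = u' + v + 1 by omega] using hs) _
  have hcop : (p ^ t).Coprime (u' + 1) :=
    Nat.Coprime.pow_left _ ((Nat.Prime.coprime_iff_not_dvd hp).2 hu)
  rw [show u' + 1 + v = u' + v + 1 by omega]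
  exact hcop.dvd_of_dvd_mul_left hdvd

/-- If not all of `a, b, c` are divisible by `p` and `p^t ∣ a+b+c` then `p^t ∣ trinom a b c`. -/
lemma pow_dvd_trinom {p : ℕ} (hp : p.Prime) {t a b c : ℕ}
    (hnd : ¬ (p ∣ a ∧ p ∣ b ∧ p ∣ c)) (hs : p ^ t ∣ a + b + c) :
    p ^ t ∣ trinom a b c := by
  have main : ∀ x y z : ℕ, ¬ p ∣ x → p ^ t ∣ x + y + z → p ^ t ∣ trinom x y z := by
    intro x y z hx hxyz
    rw [trinom_eq]
    refine Dvd.dvd.mul_right ?_ _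
    have := pow_dvd_choose_of_not_dvd hp (v := y + z) hx
      (by simpa [show x + (y + z) = x + y + z by omega] using hxyz)
    simpa [show x + (y + z) = x + y + z by omega] using this
  by_cases h1 : p ∣ a
  · by_cases h2 : p ∣ b
    · have h3 : ¬ p ∣ c := fun h3 => hnd ⟨h1, h2, h3⟩
      rw [trinom_comm13]
      exact main c b a h3 (by simpa [show c + b + a = a + b + c by omega] using hs)
    · rw [trinom_comm12]
      exact main b a c h2 (by simpa [show b + a + c = a + b + c by omega] using hs)
  · exact main a b c h1 hs


/-- Product of integers in `[1, M]` not divisible by `p`. -/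
def G (p M : ℕ) : ℕ := ∏ x ∈ (Finset.Ioc 0 M).filter (fun x => ¬ p ∣ x), x

lemma Ioc_zero_prod_eq_factorial (n : ℕ) : ∏ x ∈ Finset.Ioc 0 n, x = n.factorial := by
  have h : Finset.Ioc 0 n = Finset.Ico 1 (n + 1) := by
    ext x; simp [Finset.mem_Ioc, Finset.mem_Ico]; omega
  rw [h, Finset.prod_Ico_id_eq_factorial]

lemma not_dvd_G {p : ℕ} (hp : p.Prime) (M : ℕ) : ¬ p ∣ G p M := by
  intro h
  rw [G] at h
  rw [Prime.dvd_finset_prod_iff hp.prime] at h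
  obtain ⟨a, ha, hpa⟩ := h
  simp only [Finset.mem_filter] at ha
  exact ha.2 hpa

lemma G_pos {p M : ℕ} : 0 < G p M := by
  apply Finset.prod_pos
  intro x hx
  simp only [Finset.mem_filter, Finset.mem_Ioc] at hx
  omega

/-- Key factorial factorization: `(p*n)! = p^n * n! * G p (p*n)`. -/
lemma factorial_eq {p : ℕ} (hp : p.Prime) (n : ℕ) :
    (p * n).factorial = p ^ n * n.factorial * G p (p * n) := by
  have hp0 : 0 < p := hp.pos
  have hsplit : (∏ x ∈ (Finset.Ioc 0 (p*n)).filter (fun x => p ∣ x), x) * G p (p * n)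
      = (p * n).factorial := by
    rw [G, Finset.prod_filter_mul_prod_filter_not, Ioc_zero_prod_eq_factorial]
  have himg : (Finset.Ioc 0 (p*n)).filter (fun x => p ∣ x)
      = Finset.image (fun i => p * i) (Finset.Ioc 0 n) := by
    ext y
    simp only [Finset.mem_filter, Finset.mem_Ioc, Finset.mem_image]
    constructor
    · rintro ⟨⟨hy0, hyn⟩, i, rfl⟩
      refine ⟨i, ⟨?_, ?_⟩, rfl⟩ <;> [nlinarith; exact Nat.le_of_mul_le_mul_left hyn hp0]
    · rintro ⟨i, ⟨hi0, hin⟩, rfl⟩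
      exact ⟨⟨by positivity, Nat.mul_le_mul_left p hin⟩, ⟨i, rfl⟩⟩
  have hprod : ∏ x ∈ (Finset.Ioc 0 (p*n)).filter (fun x => p ∣ x), x
      = p ^ n * n.factorial := by
    rw [himg, Finset.prod_image (by intro x _ y _ h; exact Nat.eq_of_mul_eq_mul_left hp0 h)]
    rw [Finset.prod_mul_distrib, Finset.prod_const, Nat.card_Ioc, Nat.sub_zero,
      Ioc_zero_prod_eq_factorial]
  rw [← hsplit, hprod]

/-- The fundamental exact identity:
`C(p*m, p*k) * G(p*k) * G(p*(m-k)) = C(m, k) * G(p*m)` for `k + l = m`. -/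
lemma choose_G_identity {p : ℕ} (hp : p.Prime) (A B : ℕ) :
    (p * (A + B)).choose (p * A) * (G p (p * A) * G p (p * B))
      = (A + B).choose A * G p (p * (A + B)) := by
  have hp0 : 0 < p := hp.pos
  have h1 : (p * (A + B)).choose (p * A) * (p * A).factorial * (p * B).factorial
      = (p * (A + B)).factorial := by
    have := Nat.choose_mul_factorial_mul_factorial
      (show p * A ≤ p * (A + B) from Nat.mul_le_mul_left p (by omega))
    simpa [show p * (A + B) - p * A = p * B by rw [Nat.mul_add]; omega] using this
  have h2 : (A + B).choose A * A.factorial * B.factorial = (A + B).factorial := by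
    have := Nat.choose_mul_factorial_mul_factorial (show A ≤ A + B by omega)
    simpa [show A + B - A = B by omega] using this
  rw [factorial_eq hp A, factorial_eq hp B, factorial_eq hp (A + B), ← h2] at h1
  -- h1: C' * (p^A * A! * Ga) * (p^B * B! * Gb) = p^(A+B) * (C * A! * B!) * Gm
  have hexp : p ^ A * p ^ B = p ^ (A + B) := (pow_add p A B).symm
  apply Nat.eq_of_mul_eq_mul_left (show 0 < p ^ (A+B) * A.factorial * B.factorial by positivity)
  calc p ^ (A+B) * A.factorial * B.factorial *
        ((p * (A + B)).choose (p * A) * (G p (p * A) * G p (p * B)))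
      = (p * (A + B)).choose (p * A) * (p ^ A * A.factorial * G p (p * A)) *
        (p ^ B * B.factorial * G p (p * B)) := by rw [← hexp]; ring
    _ = p ^ (A + B) * ((A + B).choose A * A.factorial * B.factorial) * G p (p * (A + B)) := h1
    _ = p ^ (A+B) * A.factorial * B.factorial * ((A + B).choose A * G p (p * (A + B))) := by ring


/-- Pairing lemma: `q ∣ L` implies `q` divides the "sum of products omitting one element"
over integers in `[1,L]` coprime to `p`. -/
lemma dvd_sum_prod_erase {p : ℕ} (hp : p.Prime) (hodd : Odd p) {q L : ℕ}
    (hqL : q ∣ L) (hpL : p ∣ L) :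
    q ∣ ∑ x ∈ (Finset.Ioc 0 L).filter (fun x => ¬ p ∣ x),
          ∏ y ∈ ((Finset.Ioc 0 L).filter (fun x => ¬ p ∣ x)).erase x, y := by
  set s := (Finset.Ioc 0 L).filter (fun x => ¬ p ∣ x) with hs
  have hmem : ∀ x ∈ s, 0 < x ∧ x < L ∧ ¬ p ∣ x := by
    intro x hx
    simp only [hs, Finset.mem_filter, Finset.mem_Ioc] at hx
    refine ⟨hx.1.1, lt_of_le_of_ne hx.1.2 ?_, hx.2⟩
    rintro rfl; exact hx.2 hpL
  have hLs : ∀ x ∈ s, L - x ∈ s := by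
    intro x hx
    obtain ⟨h0, hL, hnd⟩ := hmem x hx
    simp only [hs, Finset.mem_filter, Finset.mem_Ioc]
    refine ⟨⟨by omega, by omega⟩, fun hd => hnd ?_⟩
    have : p ∣ L - (L - x) := (Nat.dvd_sub hpL hd)
    simpa [Nat.sub_sub_self hL.le] using this
  have hne : ∀ x ∈ s, L - x ≠ x := by
    intro x hx heq
    obtain ⟨h0, hL, hnd⟩ := hmem x hx
    have h2x : 2 * x = L := by omega
    have : p ∣ 2 * x := h2x ▸ hpL
    rcases (Nat.Prime.dvd_mul hp).1 this with h | h
    · have := Nat.le_of_dvd (by norm_num) h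
      have hodd2 : p ≠ 2 := by rintro rfl; exact (by norm_num : ¬ Odd 2) hodd
      interval_cases p <;> simp_all
    · exact hnd h
  rw [← ZMod.natCast_eq_zero_iff, Nat.cast_sum]
  apply Finset.sum_involution (fun x _ => L - x)
  · intro x hx
    -- ∏ erase x + ∏ erase (L-x) = 0 in ZMod q
    obtain ⟨h0, hL, hnd⟩ := hmem x hx
    have hLx : L - x ∈ s.erase x := Finset.mem_erase.2 ⟨hne x hx, hLs x hx⟩
    have hxe : x ∈ s.erase (L - x) := Finset.mem_erase.2 ⟨(fun h => hne x hx h.symm), hx⟩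
    have e1 : (∏ y ∈ s.erase x, y) = (L - x) * ∏ y ∈ (s.erase x).erase (L - x), y :=
      (Finset.mul_prod_erase _ _ hLx).symm
    have e2 : (∏ y ∈ s.erase (L - x), y) = x * ∏ y ∈ (s.erase x).erase (L - x), y := by
      rw [Finset.erase_right_comm]
      exact (Finset.mul_prod_erase _ _ hxe).symm
    have enat : (∏ y ∈ s.erase x, y) + (∏ y ∈ s.erase (L - x), y)
        = L * ∏ y ∈ (s.erase x).erase (L - x), y := by
      rw [e1, e2, ← Nat.add_mul]
      congr 1; omega
    have : ((∏ y ∈ s.erase x, y : ℕ) : ZMod q) + ((∏ y ∈ s.erase (L - x), y : ℕ) : ZMod q)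
        = ((L * ∏ y ∈ (s.erase x).erase (L - x), y : ℕ) : ZMod q) := by
      rw [← Nat.cast_add, enat]
    rw [this, ZMod.natCast_eq_zero_iff]
    exact Dvd.dvd.mul_right hqL _
  · intro x hx _; exact hne x hx
  · intro x hx; exact hLs x hx
  · intro x hx
    obtain ⟨h0, hL, _⟩ := hmem x hx
    omega

/-- Product expansion with a square-zero element. -/
lemma prod_add_sq_zero {R : Type*} [CommRing R] (t : R) (ht : t * t = 0)
    (s : Finset ℕ) (f : ℕ → R) :
    ∏ x ∈ s, (t + f x) = (∏ x ∈ s, f x) + t * ∑ x ∈ s, ∏ y ∈ s.erase x, f y := by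
  induction s using Finset.induction_on with
  | empty => simp
  | insert a s' ha ih =>
    rw [Finset.prod_insert ha, Finset.prod_insert ha, ih,
      Finset.sum_insert ha, Finset.erase_insert ha]
    have herase : ∑ x ∈ s', ∏ y ∈ (insert a s').erase x, f y
        = ∑ x ∈ s', f a * ∏ y ∈ s'.erase x, f y := by
      apply Finset.sum_congr rfl
      intro x hx
      rw [Finset.erase_insert_of_ne (by rintro rfl; exact ha hx),
        Finset.prod_insert (fun h => ha (Finset.mem_of_mem_erase h))]
    rw [herase, ← Finset.mul_sum]
    have : (t + f a) * ((∏ x ∈ s', f x) + t * ∑ x ∈ s', ∏ y ∈ s'.erase x, f y)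
        = f a * ∏ x ∈ s', f x +
          t * ((∏ y ∈ s', f y) + f a * ∑ x ∈ s', ∏ y ∈ s'.erase x, f y) +
          (t * t) * ∑ x ∈ s', ∏ y ∈ s'.erase x, f y := by ring
    rw [this, ht]; ring


lemma G_split {p : ℕ} (hp : p.Prime) {M : ℕ} (L : ℕ) (hM : p ∣ M) :
    G p (M + L) = G p M * ∏ x ∈ (Finset.Ioc 0 L).filter (fun x => ¬ p ∣ x), (M + x) := by
  have h1 : ∀ N, G p N = ∏ x ∈ Finset.Ioc 0 N, (if ¬ p ∣ x then x else 1) := by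
    intro N; rw [G, Finset.prod_filter]
  have h2 : (∏ x ∈ Finset.Ioc 0 M, (if ¬ p ∣ x then x else 1)) *
      ∏ x ∈ Finset.Ioc M (M + L), (if ¬ p ∣ x then x else 1)
      = ∏ x ∈ Finset.Ioc 0 (M + L), (if ¬ p ∣ x then x else 1) :=
    Finset.prod_Ioc_consecutive _ (Nat.zero_le M) (Nat.le_add_right M L)
  have h3 : ∏ x ∈ Finset.Ioc M (M + L), (if ¬ p ∣ x then x else 1)
      = ∏ x ∈ Finset.Ioc 0 L, (if ¬ p ∣ x then M + x else 1) := by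
    have hmap : Finset.Ioc M (M + L) = Finset.map (addLeftEmbedding M) (Finset.Ioc 0 L) := by
      rw [Finset.map_add_left_Ioc]; simp
    rw [hmap, Finset.prod_map]
    apply Finset.prod_congr rfl
    intro x _
    simp only [addLeftEmbedding_apply]
    congr 1
    simp [Nat.dvd_add_right hM]
  have h4 : ∏ x ∈ Finset.Ioc 0 L, (if ¬ p ∣ x then M + x else 1)
      = ∏ x ∈ (Finset.Ioc 0 L).filter (fun x => ¬ p ∣ x), (M + x) := by
    rw [Finset.prod_filter]
  rw [h1, h1, ← h2, h3, h4]

lemma G_mul_congruence {p : ℕ} (hp : p.Prime) (hodd : Odd p) {q M L : ℕ}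
    (hq : p ∣ q) (hM : q ∣ M) (hL : q ∣ L) :
    ((q : ℤ) * q) ∣ (G p (M + L) : ℤ) - (G p M : ℤ) * (G p L : ℤ) := by
  have hpM : p ∣ M := hq.trans hM
  have hpL : p ∣ L := hq.trans hL
  set s := (Finset.Ioc 0 L).filter (fun x => ¬ p ∣ x) with hs
  have hsplit := G_split hp L hpM
  have hmodeq : G p (M + L) ≡ G p M * G p L [MOD q * q] := by
    rw [← ZMod.natCast_eq_natCast_iff]
    push_cast
    rw [hsplit]
    push_cast
    have ht : ((M : ZMod (q*q)) * M) = 0 := by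
      obtain ⟨m, rfl⟩ := hM
      have : ((q : ZMod (q*q)) * m) * ((q : ZMod (q*q)) * m) = ((q*q : ℕ) : ZMod (q*q)) * (m * m) := by
        push_cast; ring
      rw [Nat.cast_mul]
      push_cast
      rw [this, ZMod.natCast_self, zero_mul]
    rw [prod_add_sq_zero _ ht]
    have hS : ((M : ZMod (q*q)) * ∑ x ∈ s, ∏ y ∈ s.erase x, (y : ZMod (q*q))) = 0 := by
      have hcast : (∑ x ∈ s, ∏ y ∈ s.erase x, (y : ZMod (q*q)))
          = ((∑ x ∈ s, ∏ y ∈ s.erase x, y : ℕ) : ZMod (q*q)) := by push_cast; rfl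
      rw [hcast, ← Nat.cast_mul, ZMod.natCast_eq_zero_iff]
      exact mul_dvd_mul hM (dvd_sum_prod_erase hp hodd hL hpL)
    rw [hS]
    have : (∏ x ∈ s, (x : ZMod (q*q))) = ((G p L : ℕ) : ZMod (q*q)) := by
      rw [G, ← hs]; push_cast; rfl
    rw [this]; ring
  have := (Nat.ModEq.dvd hmodeq)
  have h2 : ((q * q : ℕ) : ℤ) ∣ (G p M * G p L : ℕ) - (G p (M + L) : ℕ) := this
  have h3 := dvd_neg.2 h2
  push_cast at h3 ⊢
  simpa [neg_sub] using h3

/-- Jacobsthal-type congruence for binomial coefficients. -/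
lemma choose_congruence {p : ℕ} (hp : p.Prime) (hodd : Odd p) {k A B e : ℕ}
    (hA : p ^ k ∣ A) (hB : p ^ k ∣ B) (he : p ^ e ∣ (A + B).choose A) :
    (p : ℤ) ^ (2 * k + 2 + e) ∣
      (((p * (A + B)).choose (p * A) : ℤ) - ((A + B).choose A : ℤ)) := by
  have hq : (p : ℕ) ∣ p ^ (k + 1) := dvd_pow_self p (Nat.succ_ne_zero k)
  have hM : p ^ (k + 1) ∣ p * A := by rw [pow_succ, mul_comm (p^k) p]; exact mul_dvd_mul_left p hA
  have hL : p ^ (k + 1) ∣ p * B := by rw [pow_succ, mul_comm (p^k) p]; exact mul_dvd_mul_left p hB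
  have hG := G_mul_congruence hp hodd hq hM hL
  have hGm : p * A + p * B = p * (A + B) := by ring
  rw [hGm] at hG
  have hGpow : ((p ^ (k+1) : ℕ) : ℤ) * (p ^ (k+1) : ℕ) = (p : ℤ) ^ (2 * k + 2) := by
    push_cast; ring
  rw [hGpow] at hG
  have hid := choose_G_identity hp A B
  have hidZ : ((p * (A + B)).choose (p * A) : ℤ) * ((G p (p * A) : ℤ) * (G p (p * B) : ℤ))
      = ((A + B).choose A : ℤ) * (G p (p * (A + B)) : ℤ) := by exact_mod_cast hid
  have key : (((p * (A + B)).choose (p * A) : ℤ) - ((A + B).choose A : ℤ)) *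
      ((G p (p * A) : ℤ) * (G p (p * B) : ℤ))
      = ((A + B).choose A : ℤ) *
        ((G p (p * (A + B)) : ℤ) - (G p (p * A) : ℤ) * (G p (p * B) : ℤ)) := by
    rw [sub_mul, hidZ]; ring
  have hdvd : (p : ℤ) ^ (2 * k + 2 + e) ∣
      (((p * (A + B)).choose (p * A) : ℤ) - ((A + B).choose A : ℤ)) *
      ((G p (p * A) : ℤ) * (G p (p * B) : ℤ)) := by
    rw [key, pow_add, mul_comm ((p:ℤ)^(2*k+2)) _]
    exact mul_dvd_mul (by exact_mod_cast Int.natCast_dvd_natCast.2 he) hG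
  have hcop : IsCoprime ((p : ℤ) ^ (2 * k + 2 + e)) ((G p (p * A) : ℤ) * (G p (p * B) : ℤ)) := by
    rw [← Nat.cast_mul, ← Nat.cast_pow, Nat.isCoprime_iff_coprime]
    exact Nat.Coprime.pow_left _ (Nat.Coprime.mul_right
      ((hp.coprime_iff_not_dvd).2 (not_dvd_G hp _))
      ((hp.coprime_iff_not_dvd).2 (not_dvd_G hp _)))
  exact hcop.dvd_of_dvd_mul_right hdvd

lemma choose_dvd_transfer {p : ℕ} (hp : p.Prime) (A B e : ℕ) :
    p ^ e ∣ (A + B).choose A ↔ p ^ e ∣ (p * (A + B)).choose (p * A) := by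
  have hid := choose_G_identity hp A B
  have hcop : (p ^ e).Coprime (G p (p * A) * G p (p * B)) :=
    Nat.Coprime.pow_left _ (Nat.Coprime.mul_right
      ((hp.coprime_iff_not_dvd).2 (not_dvd_G hp _))
      ((hp.coprime_iff_not_dvd).2 (not_dvd_G hp _)))
  have hcop2 : (p ^ e).Coprime (G p (p * (A + B))) :=
    Nat.Coprime.pow_left _ ((hp.coprime_iff_not_dvd).2 (not_dvd_G hp _))
  constructor
  · intro h
    apply hcop.dvd_of_dvd_mul_right
    rw [hid]
    exact Dvd.dvd.mul_right h _
  · intro h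
    apply hcop2.dvd_of_dvd_mul_right
    rw [← hid]
    exact Dvd.dvd.mul_right h _

lemma choose_factorization_eq {p : ℕ} (hp : p.Prime) (A B : ℕ) :
    ((p * (A + B)).choose (p * A)).factorization p = ((A + B).choose A).factorization p := by
  have h1 : (A + B).choose A ≠ 0 := (Nat.choose_pos (by omega)).ne'
  have h2 : (p * (A + B)).choose (p * A) ≠ 0 :=
    (Nat.choose_pos (Nat.mul_le_mul_left p (by omega))).ne'
  apply le_antisymm
  · rw [← Nat.Prime.pow_dvd_iff_le_factorization hp h1]
    rw [choose_dvd_transfer hp]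
    exact Nat.ordProj_dvd _ _
  · rw [← Nat.Prime.pow_dvd_iff_le_factorization hp h2]
    rw [← choose_dvd_transfer hp]
    exact Nat.ordProj_dvd _ _

lemma trinom_mul_shape (p a b c : ℕ) :
    trinom (p * a) (p * b) (p * c)
      = (p * (a + (b + c))).choose (p * a) * ((p * (b + c)).choose (p * b)) := by
  rw [trinom_eq]
  congr 2 <;> ring

lemma trinom_shape (a b c : ℕ) :
    trinom a b c = (a + (b + c)).choose a * ((b + c).choose b) := by
  rw [trinom_eq]; congr 2; ring

lemma trinom_factorization_eq {p : ℕ} (hp : p.Prime) (a b c : ℕ) :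
    (trinom (p * a) (p * b) (p * c)).factorization p = (trinom a b c).factorization p := by
  rw [trinom_mul_shape, trinom_shape,
    Nat.factorization_mul (Nat.choose_pos (Nat.mul_le_mul_left p (by omega))).ne'
      (Nat.choose_pos (Nat.mul_le_mul_left p (by omega))).ne',
    Nat.factorization_mul (Nat.choose_pos (by omega)).ne' (Nat.choose_pos (by omega)).ne',
    Finsupp.add_apply, Finsupp.add_apply,
    choose_factorization_eq hp a (b + c), choose_factorization_eq hp b c]

lemma trinom_factorization_pow_eq {p : ℕ} (hp : p.Prime) (K a b c : ℕ) :
    (trinom (p ^ K * a) (p ^ K * b) (p ^ K * c)).factorization p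
      = (trinom a b c).factorization p := by
  induction K with
  | zero => simp
  | succ K ih =>
    have h : ∀ x : ℕ, p ^ (K + 1) * x = p * (p ^ K * x) := by intro x; ring
    rw [h, h, h, trinom_factorization_eq hp, ih]

/-- The trinomial Jacobsthal-type congruence. -/
lemma trinom_congruence {p : ℕ} (hp : p.Prime) (hodd : Odd p) {k a b c : ℕ}
    (ha : p ^ k ∣ a) (hb : p ^ k ∣ b) (hc : p ^ k ∣ c) :
    (p : ℤ) ^ (2 * k + 2 + (trinom a b c).factorization p) ∣
      (trinom (p * a) (p * b) (p * c) : ℤ) - (trinom a b c : ℤ) := by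
  set C1 := (a + (b + c)).choose a with hC1
  set C2 := (b + c).choose b with hC2
  set C1' := (p * (a + (b + c))).choose (p * a) with hC1'
  set C2' := (p * (b + c)).choose (p * b) with hC2'
  set e1 := C1.factorization p with he1
  set e2 := C2.factorization p with he2
  have hf : (trinom a b c).factorization p = e1 + e2 := by
    rw [trinom_shape, Nat.factorization_mul (Nat.choose_pos (by omega)).ne'
      (Nat.choose_pos (by omega)).ne', Finsupp.add_apply]
  have hd1 : (p : ℤ) ^ (2 * k + 2 + e1) ∣ (C1' : ℤ) - C1 :=
    choose_congruence hp hodd ha (dvd_add hb hc) (Nat.ordProj_dvd _ _)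
  have hd2 : (p : ℤ) ^ (2 * k + 2 + e2) ∣ (C2' : ℤ) - C2 :=
    choose_congruence hp hodd hb hc (Nat.ordProj_dvd _ _)
  have hp1 : (p : ℤ) ^ e1 ∣ (C1' : ℤ) := by
    have : p ^ e1 ∣ C1' := by
      rw [hC1', ← choose_dvd_transfer hp]; exact Nat.ordProj_dvd _ _
    exact_mod_cast Int.natCast_dvd_natCast.2 this
  have hp2 : (p : ℤ) ^ e2 ∣ (C2 : ℤ) := by
    exact_mod_cast Int.natCast_dvd_natCast.2 (Nat.ordProj_dvd C2 p)
  have hexpand : (trinom (p * a) (p * b) (p * c) : ℤ) - (trinom a b c : ℤ)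
      = (C1' : ℤ) * ((C2' : ℤ) - C2) + (C2 : ℤ) * ((C1' : ℤ) - C1) := by
    rw [trinom_mul_shape, trinom_shape]
    push_cast
    ring
  rw [hexpand, hf]
  apply dvd_add
  · have : (p:ℤ) ^ (2*k+2+(e1+e2)) = (p:ℤ)^e1 * (p:ℤ)^(2*k+2+e2) := by
      rw [← pow_add]; ring_nf
    rw [this]
    exact mul_dvd_mul hp1 hd2
  · have : (p:ℤ) ^ (2*k+2+(e1+e2)) = (p:ℤ)^e2 * (p:ℤ)^(2*k+2+e1) := by
      rw [← pow_add]; ring_nf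
    rw [this]
    exact mul_dvd_mul hp2 hd1


lemma dvd_of_sum_eq {p x y z N : ℕ} (h : x + y + z = N) (hN : p ∣ N)
    (hy : p ∣ y) (hz : p ∣ z) : p ∣ x := by
  have h1 : p ∣ x + y + z := h ▸ hN
  have h2 := Nat.dvd_sub h1 (dvd_add hy hz)
  simpa [show x + y + z - (y + z) = x by omega] using h2

lemma pick_two {Da Db Dc Dd : Prop} (i1 : Db → Dc → Dd → Da) (i2 : Da → Dc → Dd → Db)
    (i3 : Da → Db → Dd → Dc) (i4 : Da → Db → Dc → Dd) (h : ¬(Da ∧ Db ∧ Dc ∧ Dd)) :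
    (¬Da∧¬Db) ∨ (¬Da∧¬Dc) ∨ (¬Da∧¬Dd) ∨ (¬Db∧¬Dc) ∨ (¬Db∧¬Dd) ∨ (¬Dc∧¬Dd) := by
  by_cases da : Da <;> by_cases db : Db <;> by_cases dc : Dc <;> by_cases dd : Dd
  case pos => exact absurd ⟨da, db, dc, dd⟩ h
  all_goals first
    | exact absurd (i1 db dc dd) da
    | exact absurd (i2 da dc dd) db
    | exact absurd (i3 da db dd) dc
    | exact absurd (i4 da db dc) dd
    | exact Or.inl ⟨da, db⟩
    | exact Or.inr (Or.inl ⟨da, dc⟩)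
    | exact Or.inr (Or.inr (Or.inl ⟨da, dd⟩))
    | exact Or.inr (Or.inr (Or.inr (Or.inl ⟨db, dc⟩)))
    | exact Or.inr (Or.inr (Or.inr (Or.inr (Or.inl ⟨db, dd⟩))))
    | exact Or.inr (Or.inr (Or.inr (Or.inr (Or.inr ⟨dc, dd⟩))))

/-- If not all 12 components are divisible by `p`, then `p^(2t)` divides the product
of the four trinomial coefficients. -/
lemma two_bad {p : ℕ} (hp : p.Prime) {t N : ℕ} (hptN : p ^ t ∣ N) (ht : 1 ≤ t)
    (x1 x2 x3 x4 x5 x6 x7 x8 x9 x10 x11 x12 : ℕ)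
    (ha : x1 + x2 + x3 = N) (hb : x4 + x5 + x6 = N)
    (hc : x7 + x8 + x9 = N) (hd : x10 + x11 + x12 = N)
    (h1 : x4 + x7 + x10 = N) (h2 : x1 + x5 + x11 = N)
    (h3 : x2 + x6 + x8 = N)
    (hnd : ¬ (p ∣ x1 ∧ p ∣ x2 ∧ p ∣ x3 ∧ p ∣ x4 ∧ p ∣ x5 ∧ p ∣ x6 ∧
        p ∣ x7 ∧ p ∣ x8 ∧ p ∣ x9 ∧ p ∣ x10 ∧ p ∣ x11 ∧ p ∣ x12)) :
    p ^ (2 * t) ∣ trinom x1 x2 x3 * trinom x4 x5 x6 * trinom x7 x8 x9 * trinom x10 x11 x12 := by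
  have hpN : p ∣ N := dvd_trans (dvd_pow_self p (by omega)) hptN
  have i1 : (p ∣ x4 ∧ p ∣ x5 ∧ p ∣ x6) → (p ∣ x7 ∧ p ∣ x8 ∧ p ∣ x9) →
      (p ∣ x10 ∧ p ∣ x11 ∧ p ∣ x12) → (p ∣ x1 ∧ p ∣ x2 ∧ p ∣ x3) := by
    rintro ⟨hb4, hb5, hb6⟩ ⟨hc7, hc8, hc9⟩ ⟨hd10, hd11, hd12⟩
    have e1 := dvd_of_sum_eq h2 hpN hb5 hd11
    have e2 := dvd_of_sum_eq h3 hpN hb6 hc8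
    exact ⟨e1, e2, dvd_of_sum_eq (show x3 + x1 + x2 = N by omega) hpN e1 e2⟩
  have i2 : (p ∣ x1 ∧ p ∣ x2 ∧ p ∣ x3) → (p ∣ x7 ∧ p ∣ x8 ∧ p ∣ x9) →
      (p ∣ x10 ∧ p ∣ x11 ∧ p ∣ x12) → (p ∣ x4 ∧ p ∣ x5 ∧ p ∣ x6) := by
    rintro ⟨ha1, ha2, ha3⟩ ⟨hc7, hc8, hc9⟩ ⟨hd10, hd11, hd12⟩
    exact ⟨dvd_of_sum_eq h1 hpN hc7 hd10,
      dvd_of_sum_eq (show x5 + x1 + x11 = N by omega) hpN ha1 hd11,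
      dvd_of_sum_eq (show x6 + x2 + x8 = N by omega) hpN ha2 hc8⟩
  have i3 : (p ∣ x1 ∧ p ∣ x2 ∧ p ∣ x3) → (p ∣ x4 ∧ p ∣ x5 ∧ p ∣ x6) →
      (p ∣ x10 ∧ p ∣ x11 ∧ p ∣ x12) → (p ∣ x7 ∧ p ∣ x8 ∧ p ∣ x9) := by
    rintro ⟨ha1, ha2, ha3⟩ ⟨hb4, hb5, hb6⟩ ⟨hd10, hd11, hd12⟩
    have e7 := dvd_of_sum_eq (show x7 + x4 + x10 = N by omega) hpN hb4 hd10
    have e8 := dvd_of_sum_eq (show x8 + x2 + x6 = N by omega) hpN ha2 hb6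
    exact ⟨e7, e8, dvd_of_sum_eq (show x9 + x7 + x8 = N by omega) hpN e7 e8⟩
  have i4 : (p ∣ x1 ∧ p ∣ x2 ∧ p ∣ x3) → (p ∣ x4 ∧ p ∣ x5 ∧ p ∣ x6) →
      (p ∣ x7 ∧ p ∣ x8 ∧ p ∣ x9) → (p ∣ x10 ∧ p ∣ x11 ∧ p ∣ x12) := by
    rintro ⟨ha1, ha2, ha3⟩ ⟨hb4, hb5, hb6⟩ ⟨hc7, hc8, hc9⟩
    have e10 := dvd_of_sum_eq (show x10 + x4 + x7 = N by omega) hpN hb4 hc7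
    have e11 := dvd_of_sum_eq (show x11 + x1 + x5 = N by omega) hpN ha1 hb5
    exact ⟨e10, e11, dvd_of_sum_eq (show x12 + x10 + x11 = N by omega) hpN e10 e11⟩
  have hnd4 : ¬ ((p ∣ x1 ∧ p ∣ x2 ∧ p ∣ x3) ∧ (p ∣ x4 ∧ p ∣ x5 ∧ p ∣ x6) ∧
      (p ∣ x7 ∧ p ∣ x8 ∧ p ∣ x9) ∧ (p ∣ x10 ∧ p ∣ x11 ∧ p ∣ x12)) :=
    fun ⟨⟨d1,d2,d3⟩,⟨d4,d5,d6⟩,⟨d7,d8,d9⟩,⟨d10,d11,d12⟩⟩ =>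
      hnd ⟨d1,d2,d3,d4,d5,d6,d7,d8,d9,d10,d11,d12⟩
  have hpair := pick_two i1 i2 i3 i4 hnd4
  have hTa := fun h => pow_dvd_trinom (t := t) hp h (ha ▸ hptN)
  have hTb := fun h => pow_dvd_trinom (t := t) hp h (hb ▸ hptN)
  have hTc := fun h => pow_dvd_trinom (t := t) hp h (hc ▸ hptN)
  have hTd := fun h => pow_dvd_trinom (t := t) hp h (hd ▸ hptN)
  have hsq : p ^ (2*t) = p ^ t * p ^ t := by rw [← pow_add]; ring_nf
  set TA := trinom x1 x2 x3
  set TB := trinom x4 x5 x6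
  set TC := trinom x7 x8 x9
  set TD := trinom x10 x11 x12
  rcases hpair with ⟨u,v⟩|⟨u,v⟩|⟨u,v⟩|⟨u,v⟩|⟨u,v⟩|⟨u,v⟩
  · rw [show TA*TB*TC*TD = (TA*TB)*(TC*TD) from by ring]
    exact Dvd.dvd.mul_right (hsq ▸ mul_dvd_mul (hTa u) (hTb v)) _
  · rw [show TA*TB*TC*TD = (TA*TC)*(TB*TD) from by ring]
    exact Dvd.dvd.mul_right (hsq ▸ mul_dvd_mul (hTa u) (hTc v)) _
  · rw [show TA*TB*TC*TD = (TA*TD)*(TB*TC) from by ring]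
    exact Dvd.dvd.mul_right (hsq ▸ mul_dvd_mul (hTa u) (hTd v)) _
  · rw [show TA*TB*TC*TD = (TB*TC)*(TA*TD) from by ring]
    exact Dvd.dvd.mul_right (hsq ▸ mul_dvd_mul (hTb u) (hTc v)) _
  · rw [show TA*TB*TC*TD = (TB*TD)*(TA*TC) from by ring]
    exact Dvd.dvd.mul_right (hsq ▸ mul_dvd_mul (hTb u) (hTd v)) _
  · rw [show TA*TB*TC*TD = (TC*TD)*(TA*TB) from by ring]
    exact Dvd.dvd.mul_right (hsq ▸ mul_dvd_mul (hTc u) (hTd v)) _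


end SDC

set_option maxHeartbeats 4000000 in
open SDC in
theorem summand_delta_congruence (p : ℕ) (hp : p.Prime) (hp3 : 3 ≤ p)
    (n r : ℕ) (hn : 0 < n) (hr : 0 < r)
    (a1 a2 a3 b1 b2 b3 c1 c2 c3 d1 d2 d3 : ℕ)
    (ha : a1 + a2 + a3 = p ^ r * n) (hb : b1 + b2 + b3 = p ^ r * n)
    (hc : c1 + c2 + c3 = p ^ r * n) (hd : d1 + d2 + d3 = p ^ r * n)
    (h1 : b1 + c1 + d1 = p ^ r * n)
    (h2 : a1 + b2 + d2 = p ^ r * n)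
    (h3 : a2 + b3 + c2 = p ^ r * n) :
    ((p ∣ a1 ∧ p ∣ a2 ∧ p ∣ a3 ∧ p ∣ b1 ∧ p ∣ b2 ∧ p ∣ b3 ∧
      p ∣ c1 ∧ p ∣ c2 ∧ p ∣ c3 ∧ p ∣ d1 ∧ p ∣ d2 ∧ p ∣ d3) →
      (p : ℤ) ^ (2 * r) ∣
        ((-1) ^ (a2 + b1 + d3) * (trinom a1 a2 a3 : ℤ) * (trinom b1 b2 b3 : ℤ) *
          (trinom c1 c2 c3 : ℤ) * (trinom d1 d2 d3 : ℤ) -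
         (-1) ^ (a2 / p + b1 / p + d3 / p) * (trinom (a1 / p) (a2 / p) (a3 / p) : ℤ) *
          (trinom (b1 / p) (b2 / p) (b3 / p) : ℤ) * (trinom (c1 / p) (c2 / p) (c3 / p) : ℤ) *
          (trinom (d1 / p) (d2 / p) (d3 / p) : ℤ))) ∧
    (¬ (p ∣ a1 ∧ p ∣ a2 ∧ p ∣ a3 ∧ p ∣ b1 ∧ p ∣ b2 ∧ p ∣ b3 ∧
        p ∣ c1 ∧ p ∣ c2 ∧ p ∣ c3 ∧ p ∣ d1 ∧ p ∣ d2 ∧ p ∣ d3) →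
      (p : ℤ) ^ (2 * r) ∣
        (-1) ^ (a2 + b1 + d3) * (trinom a1 a2 a3 : ℤ) * (trinom b1 b2 b3 : ℤ) *
          (trinom c1 c2 c3 : ℤ) * (trinom d1 d2 d3 : ℤ)) := by
  have hodd : Odd p := hp.odd_of_ne_two (by omega)
  constructor
  · rintro ⟨da1, da2, da3, db1, db2, db3, dc1, dc2, dc3, dd1, dd2, dd3⟩
    obtain ⟨A1, rfl⟩ := da1
    obtain ⟨A2, rfl⟩ := da2
    obtain ⟨A3, rfl⟩ := da3
    obtain ⟨B1, rfl⟩ := db1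
    obtain ⟨B2, rfl⟩ := db2
    obtain ⟨B3, rfl⟩ := db3
    obtain ⟨C1, rfl⟩ := dc1
    obtain ⟨C2, rfl⟩ := dc2
    obtain ⟨C3, rfl⟩ := dc3
    obtain ⟨D1, rfl⟩ := dd1
    obtain ⟨D2, rfl⟩ := dd2
    obtain ⟨D3, rfl⟩ := dd3
    rw [Nat.mul_div_cancel_left A1 hp.pos, Nat.mul_div_cancel_left A2 hp.pos,
      Nat.mul_div_cancel_left A3 hp.pos, Nat.mul_div_cancel_left B1 hp.pos,
      Nat.mul_div_cancel_left B2 hp.pos, Nat.mul_div_cancel_left B3 hp.pos,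
      Nat.mul_div_cancel_left C1 hp.pos, Nat.mul_div_cancel_left C2 hp.pos,
      Nat.mul_div_cancel_left C3 hp.pos, Nat.mul_div_cancel_left D1 hp.pos,
      Nat.mul_div_cancel_left D2 hp.pos, Nat.mul_div_cancel_left D3 hp.pos]
    have hsign : ((-1 : ℤ)) ^ (p * A2 + p * B1 + p * D3) = (-1 : ℤ) ^ (A2 + B1 + D3) := by
      rw [show p * A2 + p * B1 + p * D3 = p * (A2 + B1 + D3) by ring, pow_mul,
        hodd.neg_one_pow]
    rw [hsign]
    -- y-level sum constraints
    have hprs : p ^ r = p * p ^ (r - 1) := by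
      rw [← pow_succ']; congr 1; omega
    have div3 : ∀ u v w : ℕ, p * u + p * v + p * w = p ^ r * n → u + v + w = p ^ (r-1) * n := by
      intro u v w h
      apply Nat.eq_of_mul_eq_mul_left hp.pos
      calc p * (u + v + w) = p * u + p * v + p * w := by ring
        _ = p ^ r * n := h
        _ = p * (p ^ (r-1) * n) := by rw [hprs]; ring
    have hAsum : A1 + A2 + A3 = p ^ (r-1) * n := div3 _ _ _ ha
    have hBsum : B1 + B2 + B3 = p ^ (r-1) * n := div3 _ _ _ hb
    have hCsum : C1 + C2 + C3 = p ^ (r-1) * n := div3 _ _ _ hc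
    have hDsum : D1 + D2 + D3 = p ^ (r-1) * n := div3 _ _ _ hd
    have hE1 : B1 + C1 + D1 = p ^ (r-1) * n := div3 _ _ _ h1
    have hE2 : A1 + B2 + D2 = p ^ (r-1) * n := div3 _ _ _ h2
    have hE3 : A2 + B3 + C2 = p ^ (r-1) * n := div3 _ _ _ h3
    clear ha hb hc hd h1 h2 h3
    -- find the maximal common power K
    have hexists : ∃ K, K ≤ r - 1 ∧
        (p ^ K ∣ A1 ∧ p ^ K ∣ A2 ∧ p ^ K ∣ A3 ∧ p ^ K ∣ B1 ∧ p ^ K ∣ B2 ∧ p ^ K ∣ B3 ∧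
         p ^ K ∣ C1 ∧ p ^ K ∣ C2 ∧ p ^ K ∣ C3 ∧ p ^ K ∣ D1 ∧ p ^ K ∣ D2 ∧ p ^ K ∣ D3) ∧
        (K < r - 1 →
          ¬ (p ^ (K+1) ∣ A1 ∧ p ^ (K+1) ∣ A2 ∧ p ^ (K+1) ∣ A3 ∧ p ^ (K+1) ∣ B1 ∧
             p ^ (K+1) ∣ B2 ∧ p ^ (K+1) ∣ B3 ∧ p ^ (K+1) ∣ C1 ∧ p ^ (K+1) ∣ C2 ∧
             p ^ (K+1) ∣ C3 ∧ p ^ (K+1) ∣ D1 ∧ p ^ (K+1) ∣ D2 ∧ p ^ (K+1) ∣ D3)) := by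
      classical
      set P : ℕ → Prop := fun k => p ^ k ∣ A1 ∧ p ^ k ∣ A2 ∧ p ^ k ∣ A3 ∧ p ^ k ∣ B1 ∧
        p ^ k ∣ B2 ∧ p ^ k ∣ B3 ∧ p ^ k ∣ C1 ∧ p ^ k ∣ C2 ∧ p ^ k ∣ C3 ∧ p ^ k ∣ D1 ∧
        p ^ k ∣ D2 ∧ p ^ k ∣ D3 with hPdef
      have hP0 : P 0 := by
        rw [hPdef]
        refine ⟨?_,?_,?_,?_,?_,?_,?_,?_,?_,?_,?_,?_⟩ <;> simp
      refine ⟨Nat.findGreatest P (r-1), Nat.findGreatest_le _, ?_, ?_⟩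
      · exact Nat.findGreatest_spec (P := P) (m := 0) (Nat.zero_le _) hP0
      · intro hlt
        exact Nat.findGreatest_is_greatest (P := P) (n := r - 1) (Nat.lt_succ_self _) hlt
    obtain ⟨K, hKle, hPK, hmax⟩ := hexists
    obtain ⟨kA1, kA2, kA3, kB1, kB2, kB3, kC1, kC2, kC3, kD1, kD2, kD3⟩ := hPK
    -- the valuation sum bound
    have hsum : 2 * (r - 1 - K) ≤ (trinom A1 A2 A3).factorization p +
        (trinom B1 B2 B3).factorization p + (trinom C1 C2 C3).factorization p +
        (trinom D1 D2 D3).factorization p := by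
      by_cases hKr : K = r - 1
      · rw [hKr]; simp
      · have hKlt : K < r - 1 := lt_of_le_of_ne hKle hKr
        have hgt := hmax hKlt
        obtain ⟨Z1, eZ1⟩ := kA1
        obtain ⟨Z2, eZ2⟩ := kA2
        obtain ⟨Z3, eZ3⟩ := kA3
        obtain ⟨Z4, eZ4⟩ := kB1
        obtain ⟨Z5, eZ5⟩ := kB2
        obtain ⟨Z6, eZ6⟩ := kB3
        obtain ⟨Z7, eZ7⟩ := kC1
        obtain ⟨Z8, eZ8⟩ := kC2
        obtain ⟨Z9, eZ9⟩ := kC3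
        obtain ⟨Z10, eZ10⟩ := kD1
        obtain ⟨Z11, eZ11⟩ := kD2
        obtain ⟨Z12, eZ12⟩ := kD3
        have hpow : p ^ (r-1) = p ^ K * p ^ (r-1-K) := by
          rw [← pow_add]; congr 1; omega
        have divK : ∀ u v w : ℕ, p^K * u + p^K * v + p^K * w = p ^ (r-1) * n →
            u + v + w = p ^ (r-1-K) * n := by
          intro u v w h
          apply Nat.eq_of_mul_eq_mul_left (pow_pos hp.pos K)
          calc p^K * (u + v + w) = p^K * u + p^K * v + p^K * w := by ring
            _ = p ^ (r-1) * n := h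
            _ = p^K * (p ^ (r-1-K) * n) := by rw [hpow]; ring
        have hZa : Z1 + Z2 + Z3 = p ^ (r-1-K) * n :=
          divK _ _ _ (by rw [← eZ1, ← eZ2, ← eZ3]; exact hAsum)
        have hZb : Z4 + Z5 + Z6 = p ^ (r-1-K) * n :=
          divK _ _ _ (by rw [← eZ4, ← eZ5, ← eZ6]; exact hBsum)
        have hZc : Z7 + Z8 + Z9 = p ^ (r-1-K) * n :=
          divK _ _ _ (by rw [← eZ7, ← eZ8, ← eZ9]; exact hCsum)
        have hZd : Z10 + Z11 + Z12 = p ^ (r-1-K) * n :=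
          divK _ _ _ (by rw [← eZ10, ← eZ11, ← eZ12]; exact hDsum)
        have hZ1' : Z4 + Z7 + Z10 = p ^ (r-1-K) * n :=
          divK _ _ _ (by rw [← eZ4, ← eZ7, ← eZ10]; exact hE1)
        have hZ2' : Z1 + Z5 + Z11 = p ^ (r-1-K) * n :=
          divK _ _ _ (by rw [← eZ1, ← eZ5, ← eZ11]; exact hE2)
        have hZ3' : Z2 + Z6 + Z8 = p ^ (r-1-K) * n :=
          divK _ _ _ (by rw [← eZ2, ← eZ6, ← eZ8]; exact hE3)
        have hndz : ¬ (p ∣ Z1 ∧ p ∣ Z2 ∧ p ∣ Z3 ∧ p ∣ Z4 ∧ p ∣ Z5 ∧ p ∣ Z6 ∧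
            p ∣ Z7 ∧ p ∣ Z8 ∧ p ∣ Z9 ∧ p ∣ Z10 ∧ p ∣ Z11 ∧ p ∣ Z12) := by
          rintro ⟨g1, g2, g3, g4, g5, g6, g7, g8, g9, g10, g11, g12⟩
          apply hgt
          have lift : ∀ {x z : ℕ}, x = p ^ K * z → p ∣ z → p ^ (K+1) ∣ x := by
            intro x z hxz hz
            rw [hxz, pow_succ]
            exact mul_dvd_mul_left _ hz
          exact ⟨lift eZ1 g1, lift eZ2 g2, lift eZ3 g3, lift eZ4 g4, lift eZ5 g5,
            lift eZ6 g6, lift eZ7 g7, lift eZ8 g8, lift eZ9 g9, lift eZ10 g10,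
            lift eZ11 g11, lift eZ12 g12⟩
        have hge1 : 1 ≤ r - 1 - K := Nat.sub_pos_of_lt hKlt
        have htwo := two_bad hp (t := r-1-K) (N := p ^ (r-1-K) * n) (dvd_mul_right _ n)
          hge1 Z1 Z2 Z3 Z4 Z5 Z6 Z7 Z8 Z9 Z10 Z11 Z12
          hZa hZb hZc hZd hZ1' hZ2' hZ3' hndz
        -- transfer to factorization bound
        have hTne : ∀ x y z : ℕ, trinom x y z ≠ 0 := fun x y z => (trinom_pos x y z).ne'
        have hfac : (trinom Z1 Z2 Z3 * trinom Z4 Z5 Z6 * trinom Z7 Z8 Z9 *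
            trinom Z10 Z11 Z12).factorization p
            = (trinom A1 A2 A3).factorization p + (trinom B1 B2 B3).factorization p +
              (trinom C1 C2 C3).factorization p + (trinom D1 D2 D3).factorization p := by
          rw [Nat.factorization_mul
              (Nat.mul_ne_zero (Nat.mul_ne_zero (hTne _ _ _) (hTne _ _ _)) (hTne _ _ _))
              (hTne _ _ _),
            Nat.factorization_mul (Nat.mul_ne_zero (hTne _ _ _) (hTne _ _ _)) (hTne _ _ _),
            Nat.factorization_mul (hTne _ _ _) (hTne _ _ _)]
          simp only [Finsupp.add_apply]
          have gA : (trinom A1 A2 A3).factorization p = (trinom Z1 Z2 Z3).factorization p := by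
            rw [eZ1, eZ2, eZ3, trinom_factorization_pow_eq hp]
          have gB : (trinom B1 B2 B3).factorization p = (trinom Z4 Z5 Z6).factorization p := by
            rw [eZ4, eZ5, eZ6, trinom_factorization_pow_eq hp]
          have gC : (trinom C1 C2 C3).factorization p = (trinom Z7 Z8 Z9).factorization p := by
            rw [eZ7, eZ8, eZ9, trinom_factorization_pow_eq hp]
          have gD : (trinom D1 D2 D3).factorization p = (trinom Z10 Z11 Z12).factorization p := by
            rw [eZ10, eZ11, eZ12, trinom_factorization_pow_eq hp]
          rw [gA, gB, gC, gD]
        have hle := (Nat.Prime.pow_dvd_iff_le_factorization hp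
          (Nat.mul_ne_zero (Nat.mul_ne_zero (Nat.mul_ne_zero (hTne _ _ _) (hTne _ _ _))
            (hTne _ _ _)) (hTne _ _ _))).1 htwo
        rw [hfac] at hle
        omega
    -- individual divisibility facts (over ℤ)
    have dA : (p : ℤ) ^ (2 * K + 2 + (trinom A1 A2 A3).factorization p) ∣
        (trinom (p * A1) (p * A2) (p * A3) : ℤ) - (trinom A1 A2 A3 : ℤ) :=
      trinom_congruence hp hodd kA1 kA2 kA3
    have dB : (p : ℤ) ^ (2 * K + 2 + (trinom B1 B2 B3).factorization p) ∣
        (trinom (p * B1) (p * B2) (p * B3) : ℤ) - (trinom B1 B2 B3 : ℤ) :=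
      trinom_congruence hp hodd kB1 kB2 kB3
    have dC : (p : ℤ) ^ (2 * K + 2 + (trinom C1 C2 C3).factorization p) ∣
        (trinom (p * C1) (p * C2) (p * C3) : ℤ) - (trinom C1 C2 C3 : ℤ) :=
      trinom_congruence hp hodd kC1 kC2 kC3
    have dD : (p : ℤ) ^ (2 * K + 2 + (trinom D1 D2 D3).factorization p) ∣
        (trinom (p * D1) (p * D2) (p * D3) : ℤ) - (trinom D1 D2 D3 : ℤ) :=
      trinom_congruence hp hodd kD1 kD2 kD3
    have uA : (p : ℤ) ^ ((trinom A1 A2 A3).factorization p) ∣ (trinom A1 A2 A3 : ℤ) := by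
      exact_mod_cast Int.natCast_dvd_natCast.2 (Nat.ordProj_dvd (trinom A1 A2 A3) p)
    have uB : (p : ℤ) ^ ((trinom B1 B2 B3).factorization p) ∣ (trinom B1 B2 B3 : ℤ) := by
      exact_mod_cast Int.natCast_dvd_natCast.2 (Nat.ordProj_dvd (trinom B1 B2 B3) p)
    have uC : (p : ℤ) ^ ((trinom C1 C2 C3).factorization p) ∣ (trinom C1 C2 C3 : ℤ) := by
      exact_mod_cast Int.natCast_dvd_natCast.2 (Nat.ordProj_dvd (trinom C1 C2 C3) p)
    have primed : ∀ x y z : ℕ,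
        (p : ℤ) ^ ((trinom x y z).factorization p) ∣ (trinom (p*x) (p*y) (p*z) : ℤ) := by
      intro x y z
      have h := Nat.ordProj_dvd (trinom (p*x) (p*y) (p*z)) p
      rw [trinom_factorization_eq hp] at h
      exact_mod_cast Int.natCast_dvd_natCast.2 h
    have uB' := primed B1 B2 B3
    have uC' := primed C1 C2 C3
    have uD' := primed D1 D2 D3
    -- telescoping
    have hexp : 2 * r ≤ 2 * K + 2 + (trinom A1 A2 A3).factorization p +
        (trinom B1 B2 B3).factorization p + (trinom C1 C2 C3).factorization p +
        (trinom D1 D2 D3).factorization p := by omega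
    have hd1 : (p : ℤ) ^ (2*r) ∣
        ((trinom (p*A1) (p*A2) (p*A3) : ℤ) - (trinom A1 A2 A3 : ℤ)) *
        (trinom (p*B1) (p*B2) (p*B3) : ℤ) * (trinom (p*C1) (p*C2) (p*C3) : ℤ) *
        (trinom (p*D1) (p*D2) (p*D3) : ℤ) := by
      have h := mul_dvd_mul (mul_dvd_mul (mul_dvd_mul dA uB') uC') uD'
      rw [← pow_add, ← pow_add, ← pow_add] at h
      exact dvd_trans (pow_dvd_pow _ (by omega)) h
    have hd2 : (p : ℤ) ^ (2*r) ∣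
        (trinom A1 A2 A3 : ℤ) *
        ((trinom (p*B1) (p*B2) (p*B3) : ℤ) - (trinom B1 B2 B3 : ℤ)) *
        (trinom (p*C1) (p*C2) (p*C3) : ℤ) * (trinom (p*D1) (p*D2) (p*D3) : ℤ) := by
      have h := mul_dvd_mul (mul_dvd_mul (mul_dvd_mul uA dB) uC') uD'
      rw [← pow_add, ← pow_add, ← pow_add] at h
      exact dvd_trans (pow_dvd_pow _ (by omega)) h
    have hd3 : (p : ℤ) ^ (2*r) ∣
        (trinom A1 A2 A3 : ℤ) * (trinom B1 B2 B3 : ℤ) *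
        ((trinom (p*C1) (p*C2) (p*C3) : ℤ) - (trinom C1 C2 C3 : ℤ)) *
        (trinom (p*D1) (p*D2) (p*D3) : ℤ) := by
      have h := mul_dvd_mul (mul_dvd_mul (mul_dvd_mul uA uB) dC) uD'
      rw [← pow_add, ← pow_add, ← pow_add] at h
      exact dvd_trans (pow_dvd_pow _ (by omega)) h
    have hd4 : (p : ℤ) ^ (2*r) ∣
        (trinom A1 A2 A3 : ℤ) * (trinom B1 B2 B3 : ℤ) * (trinom C1 C2 C3 : ℤ) *
        ((trinom (p*D1) (p*D2) (p*D3) : ℤ) - (trinom D1 D2 D3 : ℤ)) := by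
      have h := mul_dvd_mul (mul_dvd_mul (mul_dvd_mul uA uB) uC) dD
      rw [← pow_add, ← pow_add, ← pow_add] at h
      exact dvd_trans (pow_dvd_pow _ (by omega)) h
    have main : (p : ℤ) ^ (2*r) ∣
        (trinom (p*A1) (p*A2) (p*A3) : ℤ) * (trinom (p*B1) (p*B2) (p*B3) : ℤ) *
        (trinom (p*C1) (p*C2) (p*C3) : ℤ) * (trinom (p*D1) (p*D2) (p*D3) : ℤ) -
        (trinom A1 A2 A3 : ℤ) * (trinom B1 B2 B3 : ℤ) * (trinom C1 C2 C3 : ℤ) *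
        (trinom D1 D2 D3 : ℤ) := by
      have hid : (trinom (p*A1) (p*A2) (p*A3) : ℤ) * (trinom (p*B1) (p*B2) (p*B3) : ℤ) *
          (trinom (p*C1) (p*C2) (p*C3) : ℤ) * (trinom (p*D1) (p*D2) (p*D3) : ℤ) -
          (trinom A1 A2 A3 : ℤ) * (trinom B1 B2 B3 : ℤ) * (trinom C1 C2 C3 : ℤ) *
          (trinom D1 D2 D3 : ℤ)
          = ((trinom (p*A1) (p*A2) (p*A3) : ℤ) - (trinom A1 A2 A3 : ℤ)) *
              (trinom (p*B1) (p*B2) (p*B3) : ℤ) * (trinom (p*C1) (p*C2) (p*C3) : ℤ) *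
              (trinom (p*D1) (p*D2) (p*D3) : ℤ) +
            ((trinom A1 A2 A3 : ℤ) *
              ((trinom (p*B1) (p*B2) (p*B3) : ℤ) - (trinom B1 B2 B3 : ℤ)) *
              (trinom (p*C1) (p*C2) (p*C3) : ℤ) * (trinom (p*D1) (p*D2) (p*D3) : ℤ) +
            ((trinom A1 A2 A3 : ℤ) * (trinom B1 B2 B3 : ℤ) *
              ((trinom (p*C1) (p*C2) (p*C3) : ℤ) - (trinom C1 C2 C3 : ℤ)) *
              (trinom (p*D1) (p*D2) (p*D3) : ℤ) +
             (trinom A1 A2 A3 : ℤ) * (trinom B1 B2 B3 : ℤ) * (trinom C1 C2 C3 : ℤ) *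
              ((trinom (p*D1) (p*D2) (p*D3) : ℤ) - (trinom D1 D2 D3 : ℤ)))) := by ring
      rw [hid]
      exact dvd_add hd1 (dvd_add hd2 (dvd_add hd3 hd4))
    have hgoal : (-1 : ℤ) ^ (A2 + B1 + D3) * (trinom (p*A1) (p*A2) (p*A3) : ℤ) *
        (trinom (p*B1) (p*B2) (p*B3) : ℤ) * (trinom (p*C1) (p*C2) (p*C3) : ℤ) *
        (trinom (p*D1) (p*D2) (p*D3) : ℤ) -
        (-1 : ℤ) ^ (A2 + B1 + D3) * (trinom A1 A2 A3 : ℤ) * (trinom B1 B2 B3 : ℤ) *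
        (trinom C1 C2 C3 : ℤ) * (trinom D1 D2 D3 : ℤ)
        = (-1 : ℤ) ^ (A2 + B1 + D3) *
          ((trinom (p*A1) (p*A2) (p*A3) : ℤ) * (trinom (p*B1) (p*B2) (p*B3) : ℤ) *
           (trinom (p*C1) (p*C2) (p*C3) : ℤ) * (trinom (p*D1) (p*D2) (p*D3) : ℤ) -
           (trinom A1 A2 A3 : ℤ) * (trinom B1 B2 B3 : ℤ) * (trinom C1 C2 C3 : ℤ) *
           (trinom D1 D2 D3 : ℤ)) := by ring
    rw [hgoal]
    exact Dvd.dvd.mul_left main _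
  · intro hnd
    have htwo := two_bad hp (t := r) (N := p ^ r * n) (dvd_mul_right _ n) hr
      a1 a2 a3 b1 b2 b3 c1 c2 c3 d1 d2 d3 ha hb hc hd h1 h2 h3 hnd
    have hZ : ((p : ℤ)) ^ (2 * r) ∣
        ((trinom a1 a2 a3 * trinom b1 b2 b3 * trinom c1 c2 c3 * trinom d1 d2 d3 : ℕ) : ℤ) := by
      exact_mod_cast Int.natCast_dvd_natCast.2 htwo
    have hre : (-1 : ℤ) ^ (a2 + b1 + d3) * (trinom a1 a2 a3 : ℤ) * (trinom b1 b2 b3 : ℤ) *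
          (trinom c1 c2 c3 : ℤ) * (trinom d1 d2 d3 : ℤ)
        = (-1 : ℤ) ^ (a2 + b1 + d3) *
          ((trinom a1 a2 a3 * trinom b1 b2 b3 * trinom c1 c2 c3 * trinom d1 d2 d3 : ℕ) : ℤ) := by
      push_cast; ring
    rw [hre]
    exact Dvd.dvd.mul_left hZ _
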